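/- Let α₁, ..., αₙ be positive semidefinite n×n Hermitian matrices. Then the mixed discriminant D(α₁,...,αₙ) > 0 if and only if for every subset I ⊆ [n], rank(∑_{i∈I} α_i) ≥ |I|. -/

import Mathlib

open Matrix
open scoped ComplexOrder

/-- The mixed discriminant of `n` matrices `A₁, ..., Aₙ`:
`D(A₁,...,Aₙ) = (1/n!) ∑_{σ ∈ Sₙ} det M_σ`, where the `j`-th column of `M_σ`
is the `j`-th column of `A_{σ(j)}`.  This equals
`(1/n!) ∂ⁿ/∂t₁⋯∂tₙ det (t₁A₁ + ⋯ + tₙAₙ)`. -/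
noncomputable def mixedDiscriminant (n : ℕ) (A : Fin n → Matrix (Fin n) (Fin n) ℂ) : ℂ :=
  (n.factorial : ℂ)⁻¹ * ∑ σ : Equiv.Perm (Fin n), (Matrix.of fun i j => A (σ j) i j).det

/-!
Write each `αᵢ = ∑ₖ vᵢₖ vᵢₖ*`. Expanding every determinant in the definition multilinearly,
`D(α₁,…,αₙ) = (1/n!) ∑_c |det (v₁,c(1), …, vₙ,c(n))|²`, so `D > 0` iff some choice of one vector
`vᵢ,c(i)` from each family is linearly independent. The range of `∑_{i ∈ I} αᵢ` is spanned by the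
`vᵢₖ` with `i ∈ I`, so the rank condition is exactly the hypothesis of Rado's theorem for the
vector matroid, which gives such an independent transversal. Rado's theorem is proved by shrinking
the families: by submodularity of rank, one of two distinct vectors of a family can always be
dropped without violating the condition.
-/

open Finset Submodule Module

section Rado

variable {K V ι : Type*} [Field K] [AddCommGroup V] [Module K V]

variable (K) in
def RadoCondition (X : ι → Finset V) : Prop :=
  ∀ I : Finset ι, #I ≤ Set.finrank K (⋃ i ∈ I, (X i : Set V))

variable {X : ι → Finset V}

theorem RadoCondition.nonempty (h : RadoCondition K X) (i : ι) : (X i).Nonempty := by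
  by_contra hi
  simpa [not_nonempty_iff_eq_empty.mp hi] using h {i}

theorem RadoCondition.mem_of_finrank_lt (h : RadoCondition K X) {W : ι → Finset V} {i₀ : ι}
    (hW : ∀ i ≠ i₀, W i = X i) {C : Finset ι}
    (hC : Set.finrank K (⋃ i ∈ C, (W i : Set V)) < #C) : i₀ ∈ C := by
  by_contra hi₀
  have hWX : (⋃ i ∈ C, (W i : Set V)) = ⋃ i ∈ C, (X i : Set V) :=
    Set.iUnion₂_congr fun i hi => by rw [hW i (ne_of_mem_of_not_mem hi hi₀)]
  exact (h C).not_gt (hWX ▸ hC)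

theorem RadoCondition.exists_linearIndependent_of_card_le_one [Fintype ι]
    (h : RadoCondition K X) (hX : ∀ i, #(X i) ≤ 1) :
    ∃ c : ι → V, (∀ i, c i ∈ X i) ∧ LinearIndependent K c := by
  choose c hc using fun i => card_eq_one.mp ((hX i).antisymm (h.nonempty i).card_pos)
  refine ⟨c, fun i => by simp [hc i], linearIndependent_iff_card_le_finrank_span.mpr ?_⟩
  simpa [hc, Set.range] using h univ

variable [FiniteDimensional K V]

theorem radoCondition_of_linearIndependent {c : ι → V} (hc : ∀ i, c i ∈ X i)
    (hli : LinearIndependent K c) : RadoCondition K X := by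
  intro I
  have hI : LinearIndependent K (fun i : I => c i) := hli.comp _ Subtype.val_injective
  calc #I = Fintype.card I := (Fintype.card_coe I).symm
    _ = Set.finrank K (Set.range fun i : I => c i) :=
      linearIndependent_iff_card_eq_finrank_span.mp hI
    _ ≤ Set.finrank K (⋃ i ∈ I, (X i : Set V)) := by
      refine Submodule.finrank_mono (span_mono ?_)
      rintro _ ⟨i, rfl⟩
      exact Set.mem_biUnion i.2 (hc i)

/-- Sets `A`, `B` violating the condition for `Y` and `Z` both contain `i₀`; then
`dim (P ⊔ Q) + dim (P ⊓ Q) = dim P + dim Q` for the spans `P`, `Q` of their vectors contradicts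
the condition for `X` on `A ∪ B` and on `(A ∩ B) \ {i₀}`. -/
theorem RadoCondition.or_of_coe_eq_union {Y Z : ι → Finset V} {i₀ : ι}
    (hY : ∀ i ≠ i₀, Y i = X i) (hZ : ∀ i ≠ i₀, Z i = X i)
    (hYZ : (X i₀ : Set V) = (Y i₀ : Set V) ∪ (Z i₀ : Set V)) (h : RadoCondition K X) :
    RadoCondition K Y ∨ RadoCondition K Z := by
  classical
  unfold RadoCondition
  by_contra! ⟨⟨A, hA⟩, B, hB⟩
  have hA₀ := h.mem_of_finrank_lt hY hA
  have hB₀ := h.mem_of_finrank_lt hZ hB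
  unfold Set.finrank at hA hB
  set P := span K (⋃ i ∈ A, (Y i : Set V))
  set Q := span K (⋃ i ∈ B, (Z i : Set V))
  have hsup : span K (⋃ i ∈ A ∪ B, (X i : Set V)) ≤ P ⊔ Q := by
    rw [← span_union]
    refine span_mono (Set.iUnion₂_subset fun i hi => ?_)
    rcases eq_or_ne i i₀ with rfl | hne
    · rw [hYZ]
      exact Set.union_subset_union (Set.subset_biUnion_of_mem (u := fun i => (Y i : Set V)) hA₀)
        (Set.subset_biUnion_of_mem (u := fun i => (Z i : Set V)) hB₀)
    rcases mem_union.mp hi with hi | hi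
    · rw [← hY i hne]
      exact (Set.subset_biUnion_of_mem (u := fun i => (Y i : Set V)) hi).trans
        Set.subset_union_left
    · rw [← hZ i hne]
      exact (Set.subset_biUnion_of_mem (u := fun i => (Z i : Set V)) hi).trans
        Set.subset_union_right
  have hinf : span K (⋃ i ∈ (A ∩ B).erase i₀, (X i : Set V)) ≤ P ⊓ Q := by
    refine le_inf (span_mono (Set.iUnion₂_subset fun i hi => ?_))
      (span_mono (Set.iUnion₂_subset fun i hi => ?_))
    · rw [← hY i (ne_of_mem_erase hi)]
      exact Set.subset_biUnion_of_mem (u := fun i => (Y i : Set V))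
        (mem_of_mem_inter_left (mem_of_mem_erase hi))
    · rw [← hZ i (ne_of_mem_erase hi)]
      exact Set.subset_biUnion_of_mem (u := fun i => (Z i : Set V))
        (mem_of_mem_inter_right (mem_of_mem_erase hi))
  have hPQ := finrank_sup_add_finrank_inf_eq P Q
  have hAB := card_union_add_card_inter A B
  have hsup' := (h (A ∪ B)).trans (Submodule.finrank_mono hsup)
  have hinf' := (h _).trans (Submodule.finrank_mono hinf)
  rw [card_erase_of_mem (mem_inter.mpr ⟨hA₀, hB₀⟩)] at hinf'
  have := card_pos.mpr ⟨i₀, mem_inter.mpr ⟨hA₀, hB₀⟩⟩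
  omega

theorem RadoCondition.exists_subset_sum_card_lt [Fintype ι] (h : RadoCondition K X) {i₀ : ι}
    (hi₀ : 1 < #(X i₀)) :
    ∃ Y : ι → Finset V, RadoCondition K Y ∧ (∀ i, Y i ⊆ X i) ∧ ∑ i, #(Y i) < ∑ i, #(X i) := by
  classical
  obtain ⟨x, hx, y, hy, hxy⟩ := one_lt_card.mp hi₀
  have erase_lt {z : V} (hz : z ∈ X i₀) :
      (∀ i, Function.update X i₀ ((X i₀).erase z) i ⊆ X i) ∧
        ∑ i, #(Function.update X i₀ ((X i₀).erase z) i) < ∑ i, #(X i) := by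
    have hsub (i : ι) : Function.update X i₀ ((X i₀).erase z) i ⊆ X i := by
      rcases eq_or_ne i i₀ with rfl | hne
      · simpa using erase_subset z (X i)
      · simp [hne]
    refine ⟨hsub, sum_lt_sum (fun i _ => card_le_card (hsub i)) ⟨i₀, mem_univ _, ?_⟩⟩
    simpa using card_erase_lt_of_mem hz
  have hunion : (X i₀ : Set V) = ((X i₀).erase x : Set V) ∪ ((X i₀).erase y : Set V) := by
    ext z
    rcases eq_or_ne z x with rfl | hzx <;> simp_all
  rcases h.or_of_coe_eq_union (Y := Function.update X i₀ ((X i₀).erase x))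
    (Z := Function.update X i₀ ((X i₀).erase y)) (fun i hi => Function.update_of_ne hi _ _)
    (fun i hi => Function.update_of_ne hi _ _) (by simpa using hunion) with hY | hZ
  · exact ⟨_, hY, erase_lt hx⟩
  · exact ⟨_, hZ, erase_lt hy⟩

theorem RadoCondition.exists_linearIndependent [Fintype ι] {X : ι → Finset V}
    (h : RadoCondition K X) : ∃ c : ι → V, (∀ i, c i ∈ X i) ∧ LinearIndependent K c := by
  by_cases hX : ∀ i, #(X i) ≤ 1
  · exact h.exists_linearIndependent_of_card_le_one hX
  push Not at hX
  obtain ⟨i₀, hi₀⟩ := hX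
  obtain ⟨Y, hY, hYX, hlt⟩ := h.exists_subset_sum_card_lt hi₀
  obtain ⟨c, hc, hli⟩ := hY.exists_linearIndependent
  exact ⟨c, fun i => hYX i (hc i), hli⟩
termination_by ∑ i, #(X i)

theorem exists_linearIndependent_iff_radoCondition [Fintype ι] :
    (∃ c : ι → V, (∀ i, c i ∈ X i) ∧ LinearIndependent K c) ↔ RadoCondition K X :=
  ⟨fun ⟨_, hc, hli⟩ => radoCondition_of_linearIndependent hc hli,
    RadoCondition.exists_linearIndependent⟩

theorem exists_linearIndependent_comp_iff [Fintype ι] {κ : Type*} [Fintype κ]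
    (v : ι → κ → V) :
    (∃ c : ι → κ, LinearIndependent K fun i => v i (c i)) ↔
      ∀ I : Finset ι, #I ≤ Set.finrank K (⋃ i ∈ I, Set.range (v i)) := by
  classical
  have hX (i : ι) : ((univ.image (v i) : Finset V) : Set V) = Set.range (v i) := by simp
  simp only [← hX]
  rw [← RadoCondition, ← exists_linearIndependent_iff_radoCondition]
  constructor
  · rintro ⟨c, hc⟩
    exact ⟨fun i => v i (c i), fun i => mem_image_of_mem _ (mem_univ _), hc⟩
  · rintro ⟨x, hx, hli⟩
    choose c _ hc using fun i => mem_image.mp (hx i)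
    exact ⟨c, by simpa only [hc] using hli⟩

end Rado

theorem Finset.sum_star_mul_self_pos_iff {ι R : Type*} [Ring R] [PartialOrder R] [StarRing R]
    [StarOrderedRing R] [IsDomain R] (s : Finset ι) (f : ι → R) :
    0 < ∑ i ∈ s, star (f i) * f i ↔ ∃ i ∈ s, f i ≠ 0 := by
  rw [sum_pos_iff_of_nonneg fun i _ => star_mul_self_nonneg (f i)]
  refine exists_congr fun i => and_congr_right fun _ => ?_
  refine ⟨fun h hi => h.ne' ?_, fun hi => star_mul_self_pos (.of_ne_zero' hi)⟩
  rw [hi, star_zero, zero_mul]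

namespace Matrix

variable {n κ R : Type*} [Fintype n] [Fintype κ]

theorem rank_sum_sum_vecMulVec_star {ι : Type*} [Field R] [PartialOrder R] [StarRing R]
    [StarOrderedRing R] (s : Finset ι) (v : ι → κ → n → R) :
    (∑ i ∈ s, ∑ k, vecMulVec (v i k) (star (v i k))).rank =
      Set.finrank R (⋃ i ∈ s, Set.range (v i)) := by
  let D : Matrix n (s × κ) R := of fun p ik => v ik.1 ik.2 p
  have hD : D * Dᴴ = ∑ i ∈ s, ∑ k, vecMulVec (v i k) (star (v i k)) := by
    ext p q
    simp [D, mul_apply, vecMulVec_apply, sum_apply, Fintype.sum_prod_type,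
      ← Finset.sum_coe_sort s]
  have hcols : Set.range D.col = ⋃ i ∈ s, Set.range (v i) := by
    change Set.range (fun ik : s × κ => v ik.1 ik.2) = _
    ext x
    simp
  rw [← hD, rank_self_mul_conjTranspose, rank_eq_finrank_span_cols, hcols]
  rfl

variable [DecidableEq n]

theorem PosSemidef.exists_eq_sum_vecMulVec_star {𝕜 : Type*} [RCLike 𝕜] {A : Matrix n n 𝕜}
    (hA : A.PosSemidef) : ∃ v : n → n → 𝕜, A = ∑ k, vecMulVec (v k) (star (v k)) := by
  open scoped Matrix.Norms.L2Operator MatrixOrder in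
  obtain ⟨B, rfl⟩ := CStarAlgebra.nonneg_iff_eq_star_mul_self.mp hA.nonneg
  exact ⟨fun k => star (B k), by ext; simp [mul_apply, vecMulVec_apply, sum_apply]⟩

theorem det_ne_zero_iff_linearIndependent_rows {K : Type*} [Field K] (A : Matrix n n K) :
    A.det ≠ 0 ↔ LinearIndependent K A.row := by
  rw [linearIndependent_rows_iff_isUnit, isUnit_iff_isUnit_det, isUnit_iff_ne_zero]

theorem det_of_sum_smul [CommRing R] (a : n → κ → R) (u : n → κ → n → R) :
    (of fun i => ∑ k, a i k • u i k).det =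
      ∑ c : n → κ, (∏ i, a i (c i)) * (of fun i => u i (c i)).det := by
  change detRowAlternating (fun i => ∑ k, a i k • u i k) =
    ∑ c : n → κ, _ * detRowAlternating (fun i => u i (c i))
  rw [← AlternatingMap.coe_multilinearMap, MultilinearMap.map_sum]
  simp only [MultilinearMap.map_smul_univ, smul_eq_mul, AlternatingMap.coe_multilinearMap]

theorem star_det_eq_sum_sign_mul_prod_star [CommRing R] [StarRing R] (M : Matrix n n R) :
    star M.det = ∑ σ : Equiv.Perm n, (Equiv.Perm.sign σ : R) * ∏ j, star (M (σ j) j) := by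
  rw [← det_conjTranspose, ← det_transpose, det_apply']
  rfl

theorem det_of_perm_sum_vecMulVec_star [CommRing R] [StarRing R] (v : n → κ → n → R)
    (σ : Equiv.Perm n) :
    (of fun i j => (∑ k, vecMulVec (v (σ j) k) (star (v (σ j) k))) i j).det =
      ∑ c : n → κ, (Equiv.Perm.sign σ : R) * (∏ j, star (v (σ j) (c (σ j)) j)) *
        (of fun i => v i (c i)).det := by
  have hrows : (of fun i j => (∑ k, vecMulVec (v (σ j) k) (star (v (σ j) k))) i j)ᵀ =
      of fun j => ∑ k, star (v (σ j) k j) • v (σ j) k := by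
    ext j i
    simp [vecMulVec_apply, sum_apply, mul_comm]
  rw [← det_transpose, hrows, det_of_sum_smul,
    ← Equiv.sum_comp (σ.symm.arrowCongr (Equiv.refl κ))]
  refine sum_congr rfl fun c _ => ?_
  change _ * ((of fun i => v i (c i)).submatrix σ id).det = _
  rw [det_permute]
  simp only [Equiv.arrowCongr_apply, Equiv.coe_refl, Function.comp_apply, Equiv.symm_symm, id]
  ring

end Matrix

theorem mixedDiscriminant_sum_vecMulVec_star {n : ℕ} {κ : Type*} [Fintype κ]
    (v : Fin n → κ → Fin n → ℂ) :
    mixedDiscriminant n (fun i => ∑ k, vecMulVec (v i k) (star (v i k))) =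
      (n.factorial : ℂ)⁻¹ *
        ∑ c : Fin n → κ, star (of fun i => v i (c i)).det * (of fun i => v i (c i)).det := by
  rw [mixedDiscriminant]
  simp only [det_of_perm_sum_vecMulVec_star]
  rw [sum_comm]
  congr 1
  refine sum_congr rfl fun c _ => ?_
  rw [← sum_mul, star_det_eq_sum_sign_mul_prod_star]
  rfl

/-- For positive semidefinite Hermitian matrices `α₁, ..., αₙ`, the mixed
discriminant `D(α₁,...,αₙ)` is positive if and only if
`rank (∑_{i ∈ I} α i) ≥ |I|` for every subset `I ⊆ [n]`. -/
theorem mixedDiscriminant_pos_iff_rank_ge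
    (n : ℕ) (α : Fin n → Matrix (Fin n) (Fin n) ℂ) (hα : ∀ i, (α i).PosSemidef) :
    0 < mixedDiscriminant n α ↔ ∀ I : Finset (Fin n), I.card ≤ (∑ i ∈ I, α i).rank := by
  choose v hv using fun i => (hα i).exists_eq_sum_vecMulVec_star
  obtain rfl : α = fun i => ∑ k, vecMulVec (v i k) (star (v i k)) := funext hv
  have hfac : (0 : ℂ) < (n.factorial : ℂ)⁻¹ := inv_pos.mpr (by exact_mod_cast n.factorial_pos)
  rw [mixedDiscriminant_sum_vecMulVec_star, mul_pos_iff_of_pos_left hfac,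
    sum_star_mul_self_pos_iff]
  simp only [rank_sum_sum_vecMulVec_star, ← exists_linearIndependent_comp_iff, mem_univ, true_and,
    det_ne_zero_iff_linearIndependent_rows]
  rfl
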